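/- In the partial trust game PTG (payoffs u(FT,C)=(20,20), u(FT,D)=(-100,100), u(PT,C)=(10,10), u(PT,D)=(-25,25), u(WO,·)=(0,0)), for every simulation cost c with 0 < c < 25·(10/35 − 10/85), the strategy profile where player 2 mixes between the mixed strategy σ* = (10/85)·D + (75/85)·C and pure D with probabilities (1−p_D, p_D) for p_D = c/25, and player 1 mixes between PT and the simulation action msim (responding FT to σ* and WO to D) with appropriate probabilities, is a Nash equilibrium of PTG_msim, and both players receive strictly positive expected payoff in it. -/
import Mathlib


open Finset

noncomputable section

/-- Player 1's payoff in PTG_msim: 0 = FullTrust, 1 = PartialTrust, 2 = WalkOut,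
    3 = msim, against player 2's realized mixed strategy with defection
    probability δ.  Simulation best-responds at cost `c`. -/
def pU1 (c : ℝ) (i : Fin 4) (δ : ℝ) : ℝ :=
  if i = 0 then 20 - 120 * δ
  else if i = 1 then 10 - 35 * δ
  else if i = 2 then 0
  else max (20 - 120 * δ) (max (10 - 35 * δ) 0) - c

/-- Player 2's payoff in PTG_msim; against msim, player 1 plays the favourable
    best response (FT for δ ≤ 10/85, PT for 10/85 < δ ≤ 10/35, else WO). -/
def pU2 (i : Fin 4) (δ : ℝ) : ℝ :=
  if i = 0 then 20 + 80 * δ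
  else if i = 1 then 10 + 15 * δ
  else if i = 2 then 0
  else if δ ≤ 10 / 85 then 20 + 80 * δ
  else if δ ≤ 10 / 35 then 10 + 15 * δ
  else 0

/-- Expected payoffs when player 1 mixes with `μ1` and player 2 plays a meta-strategy
    over `k` mixed strategies with defection probabilities `d` and weights `ν`. -/
def pF1 (c : ℝ) (μ1 : Fin 4 → ℝ) (k : ℕ) (ν : Fin k → ℝ) (d : Fin k → ℝ) : ℝ :=
  ∑ j, ν j * ∑ i, μ1 i * pU1 c i (d j)

def pF2 (μ1 : Fin 4 → ℝ) (k : ℕ) (ν : Fin k → ℝ) (d : Fin k → ℝ) : ℝ :=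
  ∑ j, ν j * ∑ i, μ1 i * pU2 i (d j)

/-- Player 1's strategy mixing PartialTrust (prob 1 - psim) and msim (prob psim). -/
def ptMu (psim : ℝ) : Fin 4 → ℝ :=
  fun i => if i = 1 then 1 - psim else if i = 3 then psim else 0

/-- Player 2's meta-strategy weights: σ* = (10/85)·D + (75/85)·C with probability
    1 - c/25, and pure D with probability c/25. -/
def ptNu (c : ℝ) : Fin 2 → ℝ := ![1 - c / 25, c / 25]

/-- Player 2's meta-strategy defection probabilities. -/
def ptD : Fin 2 → ℝ := ![10 / 85, 1]

/-- For any simulation cost 0 < c < 25·(10/35 − 10/85), the profile where player 2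
    mixes σ* = (10/85)D + (75/85)C with pure D (probability c/25 on D) and player 1
    mixes PartialTrust with msim is a Nash equilibrium of PTG_msim, giving both
    players strictly positive expected payoff. -/
theorem ptg_msim_simulation_equilibrium
    (c : ℝ) (hc0 : 0 < c) (hc1 : c < 25 * (10 / 35 - 10 / 85)) :
    ∃ psim : ℝ, 0 < psim ∧ psim < 1 ∧
      ptMu psim ∈ stdSimplex ℝ (Fin 4) ∧
      ptNu c ∈ stdSimplex ℝ (Fin 2) ∧
      (∀ τ1 ∈ stdSimplex ℝ (Fin 4),
        pF1 c τ1 2 (ptNu c) ptD ≤ pF1 c (ptMu psim) 2 (ptNu c) ptD) ∧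
      (∀ (k : ℕ) (ν : Fin k → ℝ) (d : Fin k → ℝ),
        ν ∈ stdSimplex ℝ (Fin k) → (∀ j, d j ∈ Set.Icc (0 : ℝ) 1) →
        pF2 (ptMu psim) k ν d ≤ pF2 (ptMu psim) 2 (ptNu c) ptD) ∧
      0 < pF1 c (ptMu psim) 2 (ptNu c) ptD ∧
      0 < pF2 (ptMu psim) 2 (ptNu c) ptD := by

  refine ⟨9/29, by norm_num, by norm_num, ?_, ?_, ?_, ?_, ?_, ?_⟩
  · -- ptMu in simplex
    refine ⟨fun i => ?_, ?_⟩
    · fin_cases i <;> norm_num +decide [ptMu]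
    · simp [ptMu, Fin.sum_univ_four]
  · -- ptNu in simplex
    refine ⟨fun i => ?_, ?_⟩
    · fin_cases i <;> simp [ptNu] <;> nlinarith
    · simp [ptNu, Fin.sum_univ_two]
  · -- player 1 best response
    intro τ1 hτ
    have expand : ∀ μ : Fin 4 → ℝ, pF1 c μ 2 (ptNu c) ptD
        = ∑ i, μ i * ((1 - c/25) * pU1 c i (10/85) + (c/25) * pU1 c i 1) := by
      intro μ
      simp only [pF1, ptNu, ptD, Fin.sum_univ_two, Fin.sum_univ_four,
        Matrix.cons_val_zero, Matrix.cons_val_one, Matrix.head_cons]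
      ring
    have key : ∀ i : Fin 4,
        (1 - c/25) * pU1 c i (10/85) + (c/25) * pU1 c i 1 ≤ 100/17 - 21*c/17 := by
      intro i
      fin_cases i <;>
        simp only [pU1, if_true, if_false, Fin.isValue] <;>
        norm_num +decide [max_def] <;> nlinarith
    have hval : ∑ i, ptMu (9/29) i *
        ((1 - c/25) * pU1 c i (10/85) + (c/25) * pU1 c i 1) = 100/17 - 21*c/17 := by
      simp only [ptMu, Fin.sum_univ_four]
      norm_num +decide [pU1, max_def]
      ring
    rw [expand, expand, hval]
    calc ∑ i, τ1 i * ((1 - c/25) * pU1 c i (10/85) + (c/25) * pU1 c i 1)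
        ≤ ∑ i : Fin 4, τ1 i * (100/17 - 21*c/17) :=
          Finset.sum_le_sum fun i _ => mul_le_mul_of_nonneg_left (key i) (hτ.1 i)
      _ = 100/17 - 21*c/17 := by rw [← Finset.sum_mul, hτ.2, one_mul]
  · -- player 2 best response
    intro k ν d hν hd
    have expand2 : ∀ (k : ℕ) (ν d : Fin k → ℝ), pF2 (ptMu (9/29)) k ν d
        = ∑ j, ν j * ((20/29) * pU2 1 (d j) + (9/29) * pU2 3 (d j)) := by
      intro k ν d
      refine Finset.sum_congr rfl fun j _ => ?_
      simp only [ptMu, Fin.sum_univ_four]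
      norm_num +decide
    have key2 : ∀ δ : ℝ, 0 ≤ δ → δ ≤ 1 →
        (20/29) * pU2 1 δ + (9/29) * pU2 3 δ ≤ 500/29 := by
      intro δ h0 h1
      simp only [pU2]
      norm_num +decide
      split_ifs with h h' <;> nlinarith
    have hval2 : pF2 (ptMu (9/29)) 2 (ptNu c) ptD = 500/29 := by
      rw [expand2]
      simp only [ptNu, ptD, Fin.sum_univ_two, Matrix.cons_val_zero,
        Matrix.cons_val_one, Matrix.head_cons]
      norm_num +decide [pU2]
      ring
    rw [hval2, expand2]
    calc ∑ j, ν j * ((20/29) * pU2 1 (d j) + (9/29) * pU2 3 (d j))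
        ≤ ∑ j : Fin k, ν j * (500/29) :=
          Finset.sum_le_sum fun j _ => mul_le_mul_of_nonneg_left
            (key2 (d j) (hd j).1 (hd j).2) (hν.1 j)
      _ = 500/29 := by rw [← Finset.sum_mul, hν.2, one_mul]
  · -- player 1 positive payoff
    have expand : pF1 c (ptMu (9/29)) 2 (ptNu c) ptD
        = ∑ i, ptMu (9/29) i * ((1 - c/25) * pU1 c i (10/85) + (c/25) * pU1 c i 1) := by
      simp only [pF1, ptNu, ptD, Fin.sum_univ_two, Fin.sum_univ_four,
        Matrix.cons_val_zero, Matrix.cons_val_one, Matrix.head_cons]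
      ring
    have hval : ∑ i, ptMu (9/29) i *
        ((1 - c/25) * pU1 c i (10/85) + (c/25) * pU1 c i 1) = 100/17 - 21*c/17 := by
      simp only [ptMu, Fin.sum_univ_four]
      norm_num +decide [pU1, max_def]
      ring
    rw [expand, hval]
    nlinarith
  · -- player 2 positive payoff
    have expand2 : ∀ (k : ℕ) (ν d : Fin k → ℝ), pF2 (ptMu (9/29)) k ν d
        = ∑ j, ν j * ((20/29) * pU2 1 (d j) + (9/29) * pU2 3 (d j)) := by
      intro k ν d
      refine Finset.sum_congr rfl fun j _ => ?_
      simp only [ptMu, Fin.sum_univ_four]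
      norm_num +decide
    have hval2 : pF2 (ptMu (9/29)) 2 (ptNu c) ptD = 500/29 := by
      rw [expand2]
      simp only [ptNu, ptD, Fin.sum_univ_two, Matrix.cons_val_zero,
        Matrix.cons_val_one, Matrix.head_cons]
      norm_num +decide [pU2]
      ring
    rw [hval2]
    norm_num
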